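/- Let f, g : ℝ^n → ℝ be measurable functions such that ρ = e^{−f}·β and ν = e^{−g}·β are probability measures. Let ψ : ℝ^n → ℝ be a C² function such that y ↦ |y|²/2 + ψ(y) is convex, the matrix I + Hess ψ(y) is invertible for every y, and the map S = id + ∇ψ pushes ν forward to ρ. Then the backward potential ψ solves the Gaussian Monge–Ampère equation: for ν-a.e. y, e^{−g(y)} = e^{−f(S(y))}·det(I + Hess ψ(y))·exp(−⟨y, ∇ψ(y)⟩ − |∇ψ(y)|²/2). Equivalently, with det₂(I + A) := det(I + A)·e^{−trace(A)} and (Lψ)(y) = ⟨y, ∇ψ(y)⟩ − Δψ(y), one has e^{−g} = e^{−f∘S}·det₂(I + Hess ψ)·exp(−Lψ − |∇ψ|²/2) ν-a.e. (This is the finite-dimensional form of Theorem 4.2.) -/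

import Mathlib

open MeasureTheory Real Filter Topology

/-- The standard Gaussian measure on `ℝ^n`, i.e. the measure with density
`(2π)^(-n/2) exp(-|x|²/2)` with respect to Lebesgue measure. -/
noncomputable def stdGaussian (n : ℕ) : Measure (Fin n → ℝ) :=
  volume.withDensity fun x =>
    ENNReal.ofReal ((2 * π) ^ (-(n : ℝ) / 2) * Real.exp (-(∑ i, x i ^ 2) / 2))

/-- The gradient of `f : ℝ^n → ℝ`, given coordinatewise by `(∇f)(x)ᵢ = ∂ᵢf(x)`. -/
noncomputable def grad {n : ℕ} (f : (Fin n → ℝ) → ℝ) (x : Fin n → ℝ) : Fin n → ℝ :=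
  fun i => fderiv ℝ f x (Pi.single i 1)

/-- The Hessian matrix of `f : ℝ^n → ℝ`. -/
noncomputable def hess {n : ℕ} (f : (Fin n → ℝ) → ℝ) (x : Fin n → ℝ) :
    Matrix (Fin n) (Fin n) ℝ :=
  Matrix.of fun i j => fderiv ℝ (fun y => grad f y j) x (Pi.single i 1)

/-- The Jacobian matrix of a vector field `ξ : ℝ^n → ℝ^n`:
`(Dξ)(x)ᵢⱼ = ∂ⱼξᵢ(x)`. -/
noncomputable def jac {n : ℕ} (ξ : (Fin n → ℝ) → Fin n → ℝ) (x : Fin n → ℝ) :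
    Matrix (Fin n) (Fin n) ℝ :=
  Matrix.of fun i j => fderiv ℝ (fun y => ξ y i) x (Pi.single j 1)

/-! The function `φ y = |y|²/2 + ψ y` is convex, so its Hessian `1 + Hess ψ` is positive
semidefinite, and being invertible it is positive definite. Hence `S = ∇φ = id + ∇ψ` is strictly
monotone along every line, thus injective, with Jacobian determinant `det (1 + Hess ψ) > 0`.
The change of variables formula for injective differentiable maps turns `S_* ν = ρ` into the
equality of Lebesgue densities `e^{-g} γ = det (1 + Hess ψ) · (e^{-f} γ) ∘ S` a.e., where `γ` is
the Gaussian density, and `γ (y + w) = γ y · e^{-⟨y, w⟩ - |w|²/2}`. -/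

open Matrix Function

theorem ContDiff.differentiable_fderiv {𝕜 E F : Type*} [NontriviallyNormedField 𝕜]
    [NormedAddCommGroup E] [NormedSpace 𝕜 E] [NormedAddCommGroup F] [NormedSpace 𝕜 F] {f : E → F}
    (hf : ContDiff 𝕜 2 f) : Differentiable 𝕜 (fderiv 𝕜 f) :=
  (hf.fderiv_right (m := 1) le_rfl).differentiable one_ne_zero

theorem hasDerivAt_const_add_smul {E : Type*} [NormedAddCommGroup E] [NormedSpace ℝ E]
    (a v : E) (t : ℝ) : HasDerivAt (fun t : ℝ => a + t • v) v t := by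
  simpa using ((hasDerivAt_id t).smul_const v).const_add a

theorem ConvexOn.nonneg_of_hasDerivAt_of_hasDerivAt {h h' : ℝ → ℝ} {a t : ℝ}
    (hconv : ConvexOn ℝ Set.univ h) (hh : ∀ s, HasDerivAt h (h' s) s) (hh' : HasDerivAt h' a t) :
    0 ≤ a := by
  have hmono : Monotone h' := fun s u hsu => by
    simpa only [(hh _).deriv] using
      hconv.monotoneOn_deriv (fun s _ => (hh s).differentiableAt) trivial trivial hsu
  simpa only [hh'.deriv] using hmono.deriv_nonneg (x := t)

theorem ae_eq_abs_det_fderiv_mul_comp_of_map_withDensity {E : Type*} [NormedAddCommGroup E]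
    [NormedSpace ℝ E] [FiniteDimensional ℝ E] [MeasurableSpace E] [BorelSpace E]
    (μ : Measure E) [μ.IsAddHaarMeasure] {S : E → E} (hS : Differentiable ℝ S)
    (hinj : Injective S) {p q : E → ENNReal} (hp : Measurable p) (hq : Measurable q)
    (hmap : (μ.withDensity q).map S = μ.withDensity p) :
    q =ᵐ[μ] fun x => ENNReal.ofReal |(fderiv ℝ S x).det| * p (S x) := by
  have hSm : Measurable S := hS.continuous.measurable
  have hdet : Measurable fun x => ENNReal.ofReal |(fderiv ℝ S x).det| :=
    (ContinuousLinearMap.continuous_det.measurable.comp (measurable_fderiv ℝ S)).abs.ennreal_ofReal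
  refine ae_eq_of_forall_setLIntegral_eq_of_sigmaFinite hq (hdet.mul (hp.comp hSm))
    fun A hA _ => ?_
  have hSA : MeasurableSet (S '' A) :=
    (hS.continuous.measurableEmbedding hinj).measurableSet_image' hA
  calc ∫⁻ x in A, q x ∂μ = μ.withDensity q (S ⁻¹' (S '' A)) := by
        rw [Set.preimage_image_eq A hinj, withDensity_apply _ hA]
    _ = ∫⁻ x in S '' A, p x ∂μ := by rw [← Measure.map_apply hSm hSA, hmap, withDensity_apply _ hSA]
    _ = _ := lintegral_image_eq_lintegral_abs_det_fderiv_mul μ hA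
        (fun x _ => (hS x).hasFDerivAt.hasFDerivWithinAt) hinj.injOn p

section Calculus

variable {n : ℕ} {ψ : (Fin n → ℝ) → ℝ} {x : Fin n → ℝ}

noncomputable def transportMap (ψ : (Fin n → ℝ) → ℝ) (y : Fin n → ℝ) : Fin n → ℝ :=
  y + grad ψ y

theorem fderiv_apply_eq_dotProduct_grad (ψ : (Fin n → ℝ) → ℝ) (x v : Fin n → ℝ) :
    fderiv ℝ ψ x v = v ⬝ᵥ grad ψ x := by
  conv_lhs => rw [pi_eq_sum_univ' v]
  simp [grad, dotProduct]

theorem hess_apply_of_differentiableAt (h : DifferentiableAt ℝ (fderiv ℝ ψ) x) (i j : Fin n) :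
    hess ψ x i j = fderiv ℝ (fderiv ℝ ψ) x (Pi.single i 1) (Pi.single j 1) := by
  simp [hess, grad, fderiv_clm_apply h (differentiableAt_const _)]

theorem hess_isSymm (hψ : ContDiff ℝ 2 ψ) (x : Fin n → ℝ) : (hess ψ x).IsSymm := by
  ext i j
  rw [transpose_apply, hess_apply_of_differentiableAt (hψ.differentiable_fderiv x),
    hess_apply_of_differentiableAt (hψ.differentiable_fderiv x)]
  exact hψ.contDiffAt.isSymmSndFDerivAt (by simp) _ _

theorem differentiable_grad (hψ : ContDiff ℝ 2 ψ) : Differentiable ℝ (grad ψ) :=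
  differentiable_pi.2 fun _ => hψ.differentiable_fderiv.clm_apply (differentiable_const _)

theorem toMatrix'_fderiv {ξ : (Fin n → ℝ) → Fin n → ℝ} (h : DifferentiableAt ℝ ξ x) :
    LinearMap.toMatrix' (fderiv ℝ ξ x : (Fin n → ℝ) →ₗ[ℝ] Fin n → ℝ) = jac ξ x := by
  ext i j
  rw [LinearMap.toMatrix'_apply, jac, of_apply,
    (hasFDerivAt_pi'.1 h.hasFDerivAt i).fderiv]
  rfl

theorem jac_transportMap (hψ : ContDiff ℝ 2 ψ) (x : Fin n → ℝ) :
    jac (transportMap ψ) x = 1 + hess ψ x := by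
  ext i j
  have hgrad : DifferentiableAt ℝ (fun y => grad ψ y i) x :=
    differentiable_pi.1 (differentiable_grad hψ) i x
  simp only [jac, of_apply, transportMap, Pi.add_apply]
  rw [fderiv_fun_add (differentiableAt_apply i x) hgrad, (hasFDerivAt_apply i x).fderiv,
    Matrix.add_apply, ← (hess_isSymm hψ x).apply i j]
  simp [hess, one_apply, Pi.single_apply]

theorem differentiable_transportMap (hψ : ContDiff ℝ 2 ψ) : Differentiable ℝ (transportMap ψ) :=
  differentiable_id.add (differentiable_grad hψ)

theorem fderiv_transportMap_apply (hψ : ContDiff ℝ 2 ψ) (x v : Fin n → ℝ) :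
    fderiv ℝ (transportMap ψ) x v = (1 + hess ψ x) *ᵥ v := by
  rw [← jac_transportMap hψ, ← toMatrix'_fderiv (differentiable_transportMap hψ x),
    LinearMap.toMatrix'_mulVec]
  rfl

theorem det_fderiv_transportMap (hψ : ContDiff ℝ 2 ψ) (x : Fin n → ℝ) :
    (fderiv ℝ (transportMap ψ) x).det = (1 + hess ψ x).det := by
  rw [← jac_transportMap hψ, ← toMatrix'_fderiv (differentiable_transportMap hψ x),
    LinearMap.det_toMatrix']

theorem hasDerivAt_transportMap_dotProduct_line (hψ : ContDiff ℝ 2 ψ) (a v : Fin n → ℝ) (t : ℝ) :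
    HasDerivAt (fun t : ℝ => transportMap ψ (a + t • v) ⬝ᵥ v)
      (v ⬝ᵥ (1 + hess ψ (a + t • v)) *ᵥ v) t := by
  have hS := (differentiable_transportMap hψ (a + t • v)).hasFDerivAt.comp_hasDerivAt t
    (hasDerivAt_const_add_smul a v t)
  rw [fderiv_transportMap_apply hψ] at hS
  exact (HasDerivAt.fun_sum fun i _ => (hasDerivAt_pi.1 hS i).mul_const (v i)).congr_deriv
    (dotProduct_comm _ _)

theorem hasDerivAt_potential_line (hψ : ContDiff ℝ 2 ψ) (a v : Fin n → ℝ) (t : ℝ) :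
    HasDerivAt (fun t : ℝ => (∑ i, (a + t • v) i ^ 2) / 2 + ψ (a + t • v))
      (transportMap ψ (a + t • v) ⬝ᵥ v) t := by
  have hline := hasDerivAt_const_add_smul a v t
  have hquad := (HasDerivAt.fun_sum (u := Finset.univ) fun i _ =>
    (hasDerivAt_pi.1 hline i).fun_pow 2).div_const (2 : ℝ)
  have hψ' := (hψ.differentiable two_ne_zero (a + t • v)).hasFDerivAt.comp_hasDerivAt t hline
  refine (hquad.add hψ').congr_deriv ?_
  simp only [fderiv_apply_eq_dotProduct_grad, transportMap, dotProduct, Finset.sum_div,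
    ← Finset.sum_add_distrib]
  refine Finset.sum_congr rfl fun i _ => ?_
  simp only [Pi.add_apply, Pi.smul_apply, smul_eq_mul]
  ring

end Calculus

section Convexity

variable {n : ℕ} {ψ : (Fin n → ℝ) → ℝ}

theorem posSemidef_one_add_hess (hψ : ContDiff ℝ 2 ψ)
    (hconv : ConvexOn ℝ Set.univ fun y => (∑ i, y i ^ 2) / 2 + ψ y) (x : Fin n → ℝ) :
    (1 + hess ψ x).PosSemidef := by
  refine posSemidef_iff_dotProduct_mulVec.2 ⟨isHermitian_iff_isSymm.2 (isSymm_one.add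
    (hess_isSymm hψ x)), fun v => ?_⟩
  have hline : ConvexOn ℝ Set.univ fun t : ℝ => (∑ i, (x + t • v) i ^ 2) / 2 + ψ (x + t • v) := by
    have := (hconv.translate_right x).comp_linearMap (LinearMap.toSpanSingleton ℝ _ v)
    rwa [Set.preimage_univ, Set.preimage_univ] at this
  simpa using hline.nonneg_of_hasDerivAt_of_hasDerivAt (hasDerivAt_potential_line hψ x v)
    (hasDerivAt_transportMap_dotProduct_line hψ x v 0)

theorem transportMap_injective (hψ : ContDiff ℝ 2 ψ) (hpos : ∀ x, (1 + hess ψ x).PosDef) :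
    Injective (transportMap ψ) := by
  intro a b hab
  by_contra hne
  have hv : b - a ≠ 0 := sub_ne_zero.2 (Ne.symm hne)
  have hmono : StrictMono fun t : ℝ => transportMap ψ (a + t • (b - a)) ⬝ᵥ (b - a) :=
    strictMono_of_deriv_pos fun t => by
      rw [(hasDerivAt_transportMap_dotProduct_line hψ a (b - a) t).deriv]
      simpa using (hpos _).dotProduct_mulVec_pos hv
  simpa [hab] using hmono zero_lt_one

end Convexity

section Gaussian

variable {n : ℕ}

noncomputable def gaussianDensity (n : ℕ) (x : Fin n → ℝ) : ℝ :=
  (2 * π) ^ (-(n : ℝ) / 2) * Real.exp (-(∑ i, x i ^ 2) / 2)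

theorem gaussianDensity_pos (x : Fin n → ℝ) : 0 < gaussianDensity n x := by
  unfold gaussianDensity; positivity

@[fun_prop]
theorem measurable_gaussianDensity : Measurable (gaussianDensity n) := by
  unfold gaussianDensity; fun_prop

theorem gaussianDensity_add (y w : Fin n → ℝ) :
    gaussianDensity n (y + w)
      = gaussianDensity n y * Real.exp (-(∑ i, y i * w i) - (∑ i, w i ^ 2) / 2) := by
  simp only [gaussianDensity, mul_assoc, ← Real.exp_add, Pi.add_apply, add_sq,
    Finset.sum_add_distrib, ← Finset.mul_sum]
  ring_nf

theorem stdGaussian_withDensity_exp_neg {f : (Fin n → ℝ) → ℝ} (hf : Measurable f) :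
    (stdGaussian n).withDensity (fun x => ENNReal.ofReal (Real.exp (-f x)))
      = volume.withDensity fun x => ENNReal.ofReal (gaussianDensity n x * Real.exp (-f x)) := by
  rw [stdGaussian, ← withDensity_mul _ (by fun_prop) (by fun_prop)]
  congr 1 with x
  rw [Pi.mul_apply, ENNReal.ofReal_mul (gaussianDensity_pos x).le]
  rfl

end Gaussian

theorem monge_ampere_backward_general (n : ℕ)
    (f g ψ : (Fin n → ℝ) → ℝ) (hf : Measurable f) (hg : Measurable g)
    (hψ : ContDiff ℝ 2 ψ)
    (ρ ν : Measure (Fin n → ℝ))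
    (hρ : ρ = (stdGaussian n).withDensity fun x => ENNReal.ofReal (Real.exp (-f x)))
    (hν : ν = (stdGaussian n).withDensity fun x => ENNReal.ofReal (Real.exp (-g x)))
    (hconv : ConvexOn ℝ Set.univ fun y => (∑ i, y i ^ 2) / 2 + ψ y)
    (hinv : ∀ y, IsUnit (1 + hess ψ y))
    (hpush : Measure.map (fun y => y + grad ψ y) ν = ρ) :
    ∀ᵐ y ∂ν, Real.exp (-g y)
      = Real.exp (-f (y + grad ψ y)) * (1 + hess ψ y).det
        * Real.exp (-(∑ i, y i * grad ψ y i) - (∑ i, grad ψ y i ^ 2) / 2) := by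
  have hpos : ∀ y, (1 + hess ψ y).PosDef := fun y =>
    (posSemidef_one_add_hess hψ hconv y).posDef_iff_isUnit.2 (hinv y)
  rw [stdGaussian_withDensity_exp_neg hf] at hρ
  rw [stdGaussian_withDensity_exp_neg hg] at hν
  subst hρ hν
  have hdens := ae_eq_abs_det_fderiv_mul_comp_of_map_withDensity volume
    (differentiable_transportMap hψ) (transportMap_injective hψ hpos)
    (by fun_prop) (by fun_prop) hpush
  filter_upwards [(withDensity_absolutelyContinuous _ _).ae_le hdens] with y hy
  rw [det_fderiv_transportMap hψ, abs_of_pos (hpos y).det_pos,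
    ← ENNReal.ofReal_mul (hpos y).det_pos.le,
    ENNReal.ofReal_eq_ofReal_iff (mul_pos (gaussianDensity_pos y) (exp_pos _)).le
      (mul_pos (hpos y).det_pos (mul_pos (gaussianDensity_pos _) (exp_pos _))).le, transportMap,
    gaussianDensity_add] at hy
  refine mul_left_cancel₀ (gaussianDensity_pos y).ne' ?_
  rw [hy]
  ring

/-- (Finite-dimensional form of Theorem 4.2.) The backward Monge
potential `ψ` solves the Gaussian Monge–Ampère equation: for `ν`-a.e. `y`,
`e^{−g(y)} = e^{−f(S(y))}·det(I + Hess ψ(y))·exp(−⟨y, ∇ψ(y)⟩ − |∇ψ(y)|²/2)`,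
where `S = id + ∇ψ` pushes `ν = e^{−g}·β` forward to `ρ = e^{−f}·β`. -/
theorem monge_ampere_backward (n : ℕ)
    (f g ψ : (Fin n → ℝ) → ℝ) (hf : Measurable f) (hg : Measurable g)
    (hψ : ContDiff ℝ 2 ψ)
    (ρ ν : Measure (Fin n → ℝ))
    (hρ : ρ = (stdGaussian n).withDensity fun x => ENNReal.ofReal (Real.exp (-f x)))
    (hν : ν = (stdGaussian n).withDensity fun x => ENNReal.ofReal (Real.exp (-g x)))
    (hρprob : IsProbabilityMeasure ρ) (hνprob : IsProbabilityMeasure ν)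
    (hconv : ConvexOn ℝ Set.univ fun y => (∑ i, y i ^ 2) / 2 + ψ y)
    (hinv : ∀ y, IsUnit (1 + hess ψ y))
    (hpush : Measure.map (fun y => y + grad ψ y) ν = ρ) :
    ∀ᵐ y ∂ν, Real.exp (-g y)
      = Real.exp (-f (y + grad ψ y)) * (1 + hess ψ y).det
        * Real.exp (-(∑ i, y i * grad ψ y i) - (∑ i, grad ψ y i ^ 2) / 2) :=
  monge_ampere_backward_general n f g ψ hf hg hψ ρ ν hρ hν hconv hinv hpush
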